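/- arXiv:1702.05741 — 3 statements merged into one kernel-verified Lean document; each statement's English description precedes it below -/
import Mathlib

section
/- For an [n,k,d]_q linear code C and any x with 1 ≤ x ≤ ρ (ρ = max{x : Φ(x) − x < k}), there exists an [n', k', d']_q linear code with n' = n − Φ(x), k' ≥ k + x − Φ(x) > 0, and d' ≥ d. Consequently d ≤ min_{1≤x≤ρ} d_q^{opt}(n − Φ(x), k + x − Φ(x)), where d_q^{opt}(n',k') is the largest minimum distance of any [n',k']_q linear code. -/
open scoped Classical

/-- `R` is a regenerating set of coordinate `i` for the code with generator matrix `G`: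
`i ∈ R` and the `i`-th column of `G` is a linear combination of the columns indexed by `R \ {i}`. -/
def regenSet {𝔽 : Type*} [Field 𝔽] {m n : ℕ} (G : Matrix (Fin m) (Fin n) 𝔽)
    (i : Fin n) (R : Finset (Fin n)) : Prop :=
  i ∈ R ∧ (fun t => G t i) ∈ Submodule.span 𝔽 ((fun j => fun t => G t j) '' ↑(R.erase i))

/-- A sequence of regenerating sets `R j` of coordinates `l j` with a nontrivial union. -/
def ntUnion {𝔽 : Type*} [Field 𝔽] {m n : ℕ} (G : Matrix (Fin m) (Fin n) 𝔽) (x : ℕ)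
    (l : Fin x → Fin n) (R : Fin x → Finset (Fin n)) : Prop :=
  (∀ j, regenSet G (l j) (R j)) ∧ ∀ j j' : Fin x, j' < j → l j ∉ R j'

/-- `Φ(x)`: minimum size of the union of `x` regenerating sets having a nontrivial union. -/
noncomputable def Phi {𝔽 : Type*} [Field 𝔽] {m n : ℕ} (G : Matrix (Fin m) (Fin n) 𝔽)
    (x : ℕ) : ℕ :=
  sInf {c | ∃ (l : Fin x → Fin n) (R : Fin x → Finset (Fin n)),
    ntUnion G x l R ∧ (Finset.univ.biUnion R).card = c}

/-- `ρ = max { x : Φ(x) − x < k }` (over those `x` where `Φ` is defined). -/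
noncomputable def rho {𝔽 : Type*} [Field 𝔽] {m n : ℕ} (G : Matrix (Fin m) (Fin n) 𝔽)
    (k : ℕ) : ℕ :=
  sSup {x | (∃ (l : Fin x → Fin n) (R : Fin x → Finset (Fin n)), ntUnion G x l R) ∧
    Phi G x - x < k}

/-- The linear code generated by the rows of `G`. -/
def rowCode {𝔽 : Type*} [Field 𝔽] {m n : ℕ} (G : Matrix (Fin m) (Fin n) 𝔽) :
    Submodule 𝔽 (Fin n → 𝔽) :=
  Submodule.span 𝔽 (Set.range fun t => G t)

/-- Hamming weight of a vector. -/
noncomputable def wt {𝔽 : Type*} [Field 𝔽] {n : ℕ} (c : Fin n → 𝔽) : ℕ :=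
  (Finset.univ.filter fun j => c j ≠ 0).card

/-- Minimum (Hamming) distance of a linear code. -/
noncomputable def minDist {𝔽 : Type*} [Field 𝔽] {n : ℕ} (C : Submodule 𝔽 (Fin n → 𝔽)) : ℕ :=
  sInf {w | ∃ c ∈ C, c ≠ 0 ∧ wt c = w}

/-- Membership in the dual code `C⊥`. -/
def inDual {𝔽 : Type*} [Field 𝔽] {n : ℕ} (C : Submodule 𝔽 (Fin n → 𝔽))
    (e : Fin n → 𝔽) : Prop :=
  ∀ c ∈ C, ∑ j, e j * c j = 0

/-- Ceiling of natural division: `cdiv a b = ⌈a / b⌉`. -/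
def cdiv (a b : ℕ) : ℕ := (a + b - 1) / b

/-- All coordinates in `T` have `(r, δ)`-locality (Definition 3.1/3.2). -/
def hasLocality {𝔽 : Type*} [Field 𝔽] {m n : ℕ} (G : Matrix (Fin m) (Fin n) 𝔽)
    (T : Finset (Fin n)) (r δ : ℕ) : Prop :=
  ∀ ι ∈ T, ∃ S ⊆ T, ι ∈ S ∧ δ ≤ S.card ∧ S.card ≤ r + δ - 1 ∧
    ∀ E ⊆ S, E.card = δ - 1 → ∀ j ∈ E, regenSet G j ((S \ E) ∪ {j})
/-- `d_q^{opt}(n', k')`: the largest minimum distance of an `[n', k']` linear code over `𝔽`. -/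
noncomputable def dOpt (𝔽 : Type*) [Field 𝔽] (n' k' : ℕ) : ℕ :=
  sSup {d' | ∃ C : Submodule 𝔽 (Fin n' → 𝔽), Module.finrank 𝔽 C = k' ∧ minDist C = d'}

/-! Each regenerating set `R j` of `l j` yields a dual codeword supported on `R j` and nonzero at
`l j`; since `l j ∉ R j'` for `j' < j`, these `x` dual codewords are linearly independent. They
annihilate both `C` and every vector vanishing on the union `U` of the sets, so the codewords of
`C` vanishing on `U` form a subspace of dimension at least `k - (|U| - x)`. Deleting the
coordinates in `U` is injective on that subspace and preserves weights, which gives the shortened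
code. Finally `Φ` grows by at least one with each further set, so `x ≤ ρ` forces `Φ(x) < k + x`. -/

open Finset Module

section LinearAlgebra

variable {K V : Type*} [Field K] [AddCommGroup V] [Module K V]

theorem linearIndependent_of_triangular {x : ℕ} (v : Fin x → V) (f : Fin x → Dual K V)
    (hdiag : ∀ j, f j (v j) ≠ 0) (htri : ∀ j j', j' < j → f j (v j') = 0) :
    LinearIndependent K v := by
  induction x with
  | zero => exact linearIndependent_empty_type
  | succ x ih =>
    rw [← Fin.snoc_init_self v, linearIndependent_finSnoc]
    refine ⟨ih _ (Fin.init f) (fun j => hdiag _) (fun j j' h => htri _ _ h), fun hmem => ?_⟩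
    have hker : Submodule.span K (Set.range (Fin.init v)) ≤ LinearMap.ker (f (Fin.last x)) := by
      rw [Submodule.span_le]
      rintro _ ⟨j, rfl⟩
      exact htri _ _ (Fin.castSucc_lt_last j)
    exact hdiag _ (hker hmem)

theorem finrank_add_finrank_add_le_of_linearIndependent [FiniteDimensional K V] {x : ℕ}
    (C Z : Submodule K V) (φ : Fin x → Dual K V) (hφ : LinearIndependent K φ)
    (hC : ∀ j, C ≤ LinearMap.ker (φ j)) (hZ : ∀ j, Z ≤ LinearMap.ker (φ j)) :
    finrank K C + finrank K Z + x ≤ finrank K V + finrank K ↥(C ⊓ Z) := by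
  set A := Submodule.span K (Set.range φ)
  have hsup : C ⊔ Z ≤ A.dualCoannihilator := by
    rw [← Submodule.le_dualAnnihilator_iff_le_dualCoannihilator, Submodule.span_le,
      Submodule.dualAnnihilator_sup_eq]
    rintro _ ⟨j, rfl⟩
    exact ⟨(Submodule.mem_dualAnnihilator _).2 fun c hc => hC j hc,
      (Submodule.mem_dualAnnihilator _).2 fun z hz => hZ j hz⟩
  have hA : finrank K A = x := by rw [finrank_span_eq_card hφ, Fintype.card_fin]
  have := Submodule.finrank_sup_add_finrank_inf_eq C Z
  have := Submodule.finrank_mono hsup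
  have := Subspace.finrank_add_finrank_dualCoannihilator_eq A
  omega

theorem Submodule.exists_le_finrank_eq [FiniteDimensional K V] (C : Submodule K V) {r : ℕ}
    (hr : r ≤ finrank K C) : ∃ W ≤ C, finrank K W = r := by
  set b := Module.finBasis K C
  have hli : LinearIndependent K fun i : Fin r => (b (Fin.castLE hr i) : V) :=
    (b.linearIndependent.comp _ (Fin.castLE_injective hr)).map' C.subtype C.ker_subtype
  refine ⟨Submodule.span K (Set.range fun i : Fin r => (b (Fin.castLE hr i) : V)), ?_, ?_⟩
  · rw [Submodule.span_le]
    rintro _ ⟨i, rfl⟩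
    exact (b _).2
  · rw [finrank_span_eq_card hli, Fintype.card_fin]

end LinearAlgebra

section RegeneratingSets

variable {𝔽 : Type*} [Field 𝔽] {m n : ℕ} {G : Matrix (Fin m) (Fin n) 𝔽}

theorem regenSet.exists_dual {i : Fin n} {R : Finset (Fin n)} (h : regenSet G i R) :
    ∃ φ : Dual 𝔽 (Fin n → 𝔽), rowCode G ≤ LinearMap.ker φ ∧
      (∀ c : Fin n → 𝔽, (∀ u ∈ R, c u = 0) → φ c = 0) ∧ φ (Pi.single i 1) ≠ 0 := by
  obtain ⟨a, ha⟩ := (Submodule.mem_span_image_finset_iff_exists_fun' 𝔽).1 h.2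
  refine ⟨LinearMap.proj i - ∑ u ∈ R.erase i, a u • (LinearMap.proj u : Dual 𝔽 (Fin n → 𝔽)),
    ?_, ?_, ?_⟩
  · rw [rowCode, Submodule.span_le]
    rintro _ ⟨t, rfl⟩
    have hrow := congrFun ha t
    simp_all [Finset.sum_apply, mul_comm]
  · intro c hc
    have hsum : ∑ u ∈ R.erase i, a u * c u = 0 :=
      Finset.sum_eq_zero fun u hu => by rw [hc u (Finset.mem_of_mem_erase hu), mul_zero]
    simp [hc i h.1, hsum]
  · have hsum : ∑ u ∈ R.erase i, a u * (Pi.single i 1 : Fin n → 𝔽) u = 0 :=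
      Finset.sum_eq_zero fun u hu => by
        rw [Pi.single_eq_of_ne (Finset.ne_of_mem_erase hu), mul_zero]
    simp [hsum]

theorem ntUnion.injective {x : ℕ} {l : Fin x → Fin n} {R : Fin x → Finset (Fin n)}
    (h : ntUnion G x l R) : Function.Injective l := by
  intro a b hab
  by_contra hne
  rcases Ne.lt_or_gt hne with hlt | hlt
  · exact h.2 b a hlt (hab ▸ (h.1 a).1)
  · exact h.2 a b hlt (hab.symm ▸ (h.1 b).1)

theorem ntUnion.init {x : ℕ} {l : Fin (x + 1) → Fin n} {R : Fin (x + 1) → Finset (Fin n)}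
    (h : ntUnion G (x + 1) l R) :
    ntUnion G x (Fin.init l) (Fin.init R) ∧
      (univ.biUnion (Fin.init R)).card < (univ.biUnion R).card := by
  refine ⟨⟨fun j => h.1 _, fun j j' hj => h.2 _ _ hj⟩, Finset.card_lt_card ?_⟩
  refine (Finset.ssubset_iff_of_subset ?_).2 ⟨l (Fin.last x), ?_, ?_⟩
  · intro u hu
    obtain ⟨j, -, hj⟩ := Finset.mem_biUnion.1 hu
    exact Finset.mem_biUnion.2 ⟨_, Finset.mem_univ _, hj⟩
  · exact Finset.mem_biUnion.2 ⟨_, Finset.mem_univ _, (h.1 _).1⟩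
  · intro hu
    obtain ⟨j, -, hj⟩ := Finset.mem_biUnion.1 hu
    exact h.2 _ _ (Fin.castSucc_lt_last j) hj

theorem exists_ntUnion_card_eq_Phi {x : ℕ} (h : ∃ l R, ntUnion G x l R) :
    ∃ l R, ntUnion G x l R ∧ (univ.biUnion R).card = Phi G x := by
  obtain ⟨l, R, hR⟩ := h
  exact Nat.sInf_mem (s := {c | ∃ l R, ntUnion G x l R ∧ (univ.biUnion R).card = c})
    ⟨_, l, R, hR, rfl⟩

theorem Phi_le_card {x : ℕ} {l : Fin x → Fin n} {R : Fin x → Finset (Fin n)}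
    (h : ntUnion G x l R) : Phi G x ≤ (univ.biUnion R).card :=
  Nat.sInf_le ⟨l, R, h, rfl⟩

theorem Phi_lt_Phi_succ {x : ℕ} (h : ∃ l R, ntUnion G (x + 1) l R) :
    (∃ l R, ntUnion G x l R) ∧ Phi G x < Phi G (x + 1) := by
  obtain ⟨l, R, hR, hcard⟩ := exists_ntUnion_card_eq_Phi h
  obtain ⟨hinit, hlt⟩ := hR.init
  exact ⟨⟨_, _, hinit⟩, hcard ▸ (Phi_le_card hinit).trans_lt hlt⟩

theorem Phi_add_sub_le {x y : ℕ} (hxy : x ≤ y) (h : ∃ l R, ntUnion G y l R) :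
    (∃ l R, ntUnion G x l R) ∧ Phi G x + (y - x) ≤ Phi G y := by
  induction y, hxy using Nat.le_induction with
  | base => simpa using h
  | succ y hxy ih =>
    obtain ⟨hy, hlt⟩ := Phi_lt_Phi_succ h
    obtain ⟨hx, hle⟩ := ih hy
    exact ⟨hx, by omega⟩

theorem exists_ntUnion_and_Phi_lt_of_le_rho {k x : ℕ} (hx : 1 ≤ x) (hxρ : x ≤ rho G k) :
    (∃ l R, ntUnion G x l R) ∧ Phi G x < k + x := by
  set S := {y | (∃ (l : Fin y → Fin n) (R : Fin y → Finset (Fin n)), ntUnion G y l R) ∧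
    Phi G y - y < k}
  change x ≤ sSup S at hxρ
  have hbdd : BddAbove S := ⟨n, fun y ⟨⟨l, _, hR⟩, _⟩ => by
    simpa using Fintype.card_le_of_injective l hR.injective⟩
  have hne : S.Nonempty := by
    by_contra hS
    rw [Set.not_nonempty_iff_eq_empty] at hS
    simp [hS] at hxρ
    omega
  obtain ⟨hρ, hΦρ⟩ : sSup S ∈ S := Nat.sSup_mem hne hbdd
  obtain ⟨hx, hle⟩ := Phi_add_sub_le hxρ hρ
  exact ⟨hx, by omega⟩

end RegeneratingSets

section Shortening

open Function

variable {𝔽 : Type*} [Field 𝔽] {m n n' : ℕ}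

/-- The codewords of `C` vanishing off the range of `s`, read through `s`. When `s` enumerates the
complement of `U`, this is `C` shortened on `U`. -/
noncomputable def shorten (C : Submodule 𝔽 (Fin n → 𝔽)) (s : Fin n' → Fin n) :
    Submodule 𝔽 (Fin n' → 𝔽) :=
  C.comap (ExtendByZero.linearMap 𝔽 s)

theorem wt_extend {s : Fin n' → Fin n} (hs : Injective s) (c : Fin n' → 𝔽) :
    wt (extend s c 0) = wt c := by
  have hsupp : univ.filter (fun u => extend s c 0 u ≠ 0) =
      (univ.filter fun a => c a ≠ 0).map ⟨s, hs⟩ := by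
    ext u
    by_cases hu : ∃ a, s a = u
    · obtain ⟨a, rfl⟩ := hu
      simp only [mem_filter, mem_univ, true_and, mem_map, Embedding.coeFn_mk, hs.eq_iff,
        exists_eq_right, hs.extend_apply]
    · simp only [mem_filter, mem_univ, true_and, mem_map, extend_apply' _ _ _ hu, Pi.zero_apply,
        ne_eq, not_true_eq_false, false_iff]
      rintro ⟨a, -, rfl⟩
      exact hu ⟨a, rfl⟩
  rw [wt, hsupp, card_map, wt]

theorem minDist_le_wt {C : Submodule 𝔽 (Fin n → 𝔽)} {c : Fin n → 𝔽} (hc : c ∈ C)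
    (hne : c ≠ 0) : minDist C ≤ wt c :=
  Nat.sInf_le ⟨c, hc, hne, rfl⟩

theorem minDist_le_minDist_of_forall_wt_le {C : Submodule 𝔽 (Fin n → 𝔽)}
    {C' : Submodule 𝔽 (Fin n' → 𝔽)}
    (hC' : C' ≠ ⊥) (h : ∀ c' ∈ C', c' ≠ 0 → ∃ c ∈ C, c ≠ 0 ∧ wt c ≤ wt c') :
    minDist C ≤ minDist C' := by
  obtain ⟨c', hc', hne⟩ := Submodule.exists_mem_ne_zero_of_ne_bot hC'
  refine le_csInf ⟨_, c', hc', hne, rfl⟩ ?_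
  rintro _ ⟨c', hc', hne, rfl⟩
  obtain ⟨c, hc, hc0, hle⟩ := h c' hc' hne
  exact (minDist_le_wt hc hc0).trans hle

theorem minDist_anti {C W : Submodule 𝔽 (Fin n → 𝔽)} (hW : W ≠ ⊥) (hle : W ≤ C) :
    minDist C ≤ minDist W :=
  minDist_le_minDist_of_forall_wt_le hW fun c hc hne => ⟨c, hle hc, hne, le_rfl⟩

theorem minDist_le_minDist_shorten {C : Submodule 𝔽 (Fin n → 𝔽)} {s : Fin n' → Fin n}
    (hs : Injective s) (h : shorten C s ≠ ⊥) : minDist C ≤ minDist (shorten C s) := by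
  refine minDist_le_minDist_of_forall_wt_le h fun c' hc' hne =>
    ⟨extend s c' 0, hc', ?_, (wt_extend hs c').le⟩
  have := (extend_injective hs (0 : Fin n → 𝔽)).ne hne
  rwa [extend_zero] at this

theorem minDist_le_length (C : Submodule 𝔽 (Fin n → 𝔽)) : minDist C ≤ n := by
  by_cases h : ∃ c ∈ C, c ≠ 0
  · obtain ⟨c, hc, hne⟩ := h
    exact (minDist_le_wt hc hne).trans ((card_filter_le _ _).trans (by simp))
  · have hempty : {w | ∃ c ∈ C, c ≠ 0 ∧ wt c = w} = ∅ := by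
      ext w
      simp_all
    simp [minDist, hempty]

theorem minDist_le_dOpt {C : Submodule 𝔽 (Fin n → 𝔽)} {r : ℕ} (hC : finrank 𝔽 C = r) :
    minDist C ≤ dOpt 𝔽 n r :=
  le_csSup ⟨n, by rintro _ ⟨C, -, rfl⟩; exact minDist_le_length C⟩ ⟨C, hC, rfl⟩

theorem finrank_shorten {s : Fin n' → Fin n} (hs : Injective s)
    (C : Submodule 𝔽 (Fin n → 𝔽)) :
    finrank 𝔽 (shorten C s) =
      finrank 𝔽 ↥(C ⊓ LinearMap.range (ExtendByZero.linearMap 𝔽 s)) := by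
  have hinj : Injective (ExtendByZero.linearMap 𝔽 s) := extend_injective hs 0
  rw [inf_comm, ← Submodule.map_comap_eq]
  exact (Submodule.equivMapOfInjective _ hinj _).finrank_eq

theorem ntUnion.finrank_rowCode_add_le {G : Matrix (Fin m) (Fin n) 𝔽} {x : ℕ}
    {l : Fin x → Fin n} {R : Fin x → Finset (Fin n)} (h : ntUnion G x l R)
    {s : Fin n' → Fin n} (hs : Injective s) (hsR : ∀ a j, s a ∉ R j) :
    finrank 𝔽 (rowCode G) + n' + x ≤ n + finrank 𝔽 (shorten (rowCode G) s) := by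
  choose φ hφC hφR hφl using fun j => (h.1 j).exists_dual
  have hli : LinearIndependent 𝔽 φ := by
    refine linearIndependent_of_triangular φ (fun j => Dual.eval 𝔽 _ (Pi.single (l j) 1)) hφl
      fun j j' hlt => hφR j' _ fun u hu => Pi.single_eq_of_ne ?_ _
    rintro rfl
    exact h.2 j j' hlt hu
  have hZ : ∀ j, LinearMap.range (ExtendByZero.linearMap 𝔽 s) ≤ LinearMap.ker (φ j) := by
    rintro j _ ⟨c', rfl⟩
    exact hφR j _ fun u hu => extend_apply' _ _ _ fun ⟨a, ha⟩ => hsR a j (ha ▸ hu)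
  have hbound := finrank_add_finrank_add_le_of_linearIndependent _ _ φ hli hφC hZ
  rwa [LinearMap.finrank_range_of_inj (extend_injective hs 0), finrank_fin_fun,
    finrank_fin_fun, ← finrank_shorten hs] at hbound

theorem exists_injective_forall_notMem (U : Finset (Fin n)) :
    ∃ s : Fin (n - U.card) → Fin n, Injective s ∧ ∀ a, s a ∉ U := by
  have hcard : Uᶜ.card = n - U.card := by rw [card_compl, Fintype.card_fin]
  exact ⟨Uᶜ.orderEmbOfFin hcard, (Uᶜ.orderEmbOfFin hcard).injective,
    fun a => mem_compl.1 (Uᶜ.orderEmbOfFin_mem hcard a)⟩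

end Shortening

theorem shortening_bound_general {𝔽 : Type*} [Field 𝔽] {m n : ℕ}
    (G : Matrix (Fin m) (Fin n) 𝔽) (k d : ℕ)
    (hk : k = Module.finrank 𝔽 (rowCode G))
    (hd : d = minDist (rowCode G)) :
    ∀ x, 1 ≤ x → x ≤ rho G k →
      (∃ C' : Submodule 𝔽 (Fin (n - Phi G x) → 𝔽),
        0 < k + x - Phi G x ∧ k + x - Phi G x ≤ Module.finrank 𝔽 C' ∧ d ≤ minDist C') ∧
      d ≤ dOpt 𝔽 (n - Phi G x) (k + x - Phi G x) := by
  intro x hx hxρ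
  obtain ⟨hntx, hΦ⟩ := exists_ntUnion_and_Phi_lt_of_le_rho hx hxρ
  obtain ⟨l, R, hR, hcard⟩ := exists_ntUnion_card_eq_Phi hntx
  obtain ⟨s, hs, hsU⟩ : ∃ s : Fin (n - Phi G x) → Fin n, Function.Injective s ∧
      ∀ a, s a ∉ univ.biUnion R := hcard ▸ exists_injective_forall_notMem _
  have hrank := hR.finrank_rowCode_add_le hs fun a j hj =>
    hsU a (mem_biUnion.2 ⟨j, mem_univ _, hj⟩)
  have hΦn : Phi G x ≤ n := hcard ▸ (card_le_univ _).trans_eq (Fintype.card_fin n)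
  set C' := shorten (rowCode G) s
  have hdim : k + x - Phi G x ≤ finrank 𝔽 C' := by omega
  obtain ⟨W, hWC', hW⟩ := C'.exists_le_finrank_eq hdim
  have hW0 : W ≠ ⊥ := by
    rintro rfl
    rw [finrank_bot] at hW
    omega
  have hd' : d ≤ minDist C' := hd ▸ minDist_le_minDist_shorten hs (ne_bot_of_le_ne_bot hW0 hWC')
  exact ⟨⟨C', by omega, hdim, hd'⟩,
    hd'.trans ((minDist_anti hW0 hWC').trans (minDist_le_dOpt hW))⟩

/-- shortening along regenerating sets yields an `[n − Φ(x), ≥ k + x − Φ(x), ≥ d]`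
code for every `1 ≤ x ≤ ρ`; consequently `d ≤ d_q^{opt}(n − Φ(x), k + x − Φ(x))`. -/
theorem shortening_bound {𝔽 : Type*} [Field 𝔽] {m n : ℕ}
    (G : Matrix (Fin m) (Fin n) 𝔽) (k d : ℕ)
    (hk : k = Module.finrank 𝔽 (rowCode G)) (hk1 : 1 ≤ k)
    (hd : d = minDist (rowCode G)) :
    ∀ x, 1 ≤ x → x ≤ rho G k →
      (∃ C' : Submodule 𝔽 (Fin (n - Phi G x) → 𝔽),
        0 < k + x - Phi G x ∧ k + x - Phi G x ≤ Module.finrank 𝔽 C' ∧ d ≤ minDist C') ∧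
      d ≤ dOpt 𝔽 (n - Phi G x) (k + x - Phi G x) :=
  shortening_bound_general G k d hk hd
end

section
/- Let C be an [n,k,d] linear code with two (r_i, δ_i)-localities (i = 1,2), r_1 ≤ r_2, δ_1 ≥ δ_2 ≥ 2, and Δ = ⌈n_1/(r_1+δ_1−1)⌉(δ_1−1). If r_1⌈n_1/(r_1+δ_1−1)⌉ ≤ k−1 and r_1⌈(Δ−1)/(δ_1−1)⌉ + (Δ−1) < n_1, then for all x with Δ ≤ x ≤ ρ+1: Φ(x) ≤ r_1⌈n_1/(r_1+δ_1−1)⌉ + r_2⌈(x−Δ)/(δ_2−1)⌉ + x, where ρ = max{x : Φ(x) − x < k}. -/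
open scoped Classical

/-!
Regenerating sets are added one locality block at a time. If `S` is the locality set of a
coordinate `ι` outside the current union `U`, choose `E ⊆ S` with `|E| = δ - 1` either containing
or contained in `S \ U`; every `j ∈ E \ U` is then regenerated by `(S \ E) ∪ {j}`. This adds
`|E \ U|` new sets at the cost of `|E \ U|` new coordinates, plus at most `|S \ E| ≤ r` more, and
the extra cost is paid only when `E ⊆ S \ U`, i.e. when a whole block of `δ - 1` sets is gained.
First `⌈n₁/(r₁+δ₁-1)⌉` blocks of `δ₁ - 1` sets are placed inside `T₁` (fresh coordinates exist
there by the hypothesis on `n₁`); then blocks of `δ₂ - 1` sets are added, each starting from an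
optimal union for `Φ` (a fresh coordinate of `T₁` serves as well, as `r₁ ≤ r₂` and `δ₂ ≤ δ₁`).
Fresh coordinates exist there because the columns of a nontrivial union of `y` sets on `U` span a
space of dimension at most `|U| - y`, and `Φ(y) - y < k` for `y ≤ ρ`.
-/

namespace Finset

theorem exists_subset_card_eq_and_subset_or_superset {α : Type*} {F S : Finset α} {c : ℕ}
    (hFS : F ⊆ S) (hc : c ≤ S.card) : ∃ E ⊆ S, E.card = c ∧ (F ⊆ E ∨ E ⊆ F) := by
  rcases le_total c F.card with hcF | hFc
  · obtain ⟨E, hEF, hE⟩ := exists_subset_card_eq hcF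
    exact ⟨E, hEF.trans hFS, hE, Or.inr hEF⟩
  · obtain ⟨E, hFE, hES, hE⟩ := exists_subsuperset_card_eq hFS hFc hc
    exact ⟨E, hES, hE, Or.inl hFE⟩

end Finset

theorem le_cdiv_mul (y : ℕ) {q : ℕ} (hq : 0 < q) : y ≤ cdiv y q * q :=
  mul_comm q (cdiv y q) ▸ le_smul_ceilDiv hq

theorem sub_one_le_cdiv_mul_sub_one (a : ℕ) {q : ℕ} (hq : 0 < q) : a - 1 ≤ cdiv (a * q - 1) q := by
  have hmul : (a - 1) * q ≤ a * q - 1 := by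
    rw [Nat.sub_one_mul]
    omega
  exact ((Nat.le_div_iff_mul_le hq).2 hmul).trans (Nat.div_le_div_right (by omega))

section CodeLocality

open Finset Module

variable {𝔽 : Type*} [Field 𝔽] {m n : ℕ} (G : Matrix (Fin m) (Fin n) 𝔽)

noncomputable def colSpan (U : Finset (Fin n)) : Submodule 𝔽 (Fin m → 𝔽) :=
  Submodule.span 𝔽 ((fun j t => G t j) '' ↑U)

theorem finrank_colSpan_le_card (U : Finset (Fin n)) : finrank 𝔽 (colSpan G U) ≤ U.card := by
  rw [colSpan, ← coe_image]
  exact (finrank_span_finset_le_card _).trans card_image_le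

theorem finrank_colSpan_univ : finrank 𝔽 (colSpan G univ) = finrank 𝔽 (rowCode G) := by
  rw [colSpan, coe_univ, Set.image_univ]
  exact (Matrix.rank_eq_finrank_span_cols G).symm.trans (Matrix.rank_eq_finrank_span_row G)

def HasNtUnionIn (x : ℕ) (U : Finset (Fin n)) : Prop :=
  ∃ (l : Fin x → Fin n) (R : Fin x → Finset (Fin n)), ntUnion G x l R ∧ univ.biUnion R ⊆ U

variable {G}

namespace HasNtUnionIn

variable {x : ℕ} {U V : Finset (Fin n)}

theorem mono (h : HasNtUnionIn G x U) (hUV : U ⊆ V) : HasNtUnionIn G x V :=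
  let ⟨l, R, hnt, hRU⟩ := h
  ⟨l, R, hnt, hRU.trans hUV⟩

theorem zero : HasNtUnionIn G 0 ∅ :=
  ⟨Fin.elim0, Fin.elim0, ⟨fun i => i.elim0, fun i => i.elim0⟩, by simp⟩

theorem snoc (h : HasNtUnionIn G x U) {j : Fin n} {A : Finset (Fin n)} (hjU : j ∉ U)
    (hreg : regenSet G j (A ∪ {j})) : HasNtUnionIn G (x + 1) (U ∪ (A ∪ {j})) := by
  obtain ⟨l, R, ⟨hregR, hnt⟩, hRU⟩ := h
  have hRU' : ∀ i, R i ⊆ U := fun i => (subset_biUnion_of_mem R (mem_univ i)).trans hRU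
  refine ⟨Fin.snoc l j, Fin.snoc R (A ∪ {j}), ⟨fun i => ?_, fun i i' hi => ?_⟩, ?_⟩
  · cases i using Fin.lastCases with
    | last => simpa only [Fin.snoc_last] using hreg
    | cast i => simpa only [Fin.snoc_castSucc] using hregR i
  · cases i using Fin.lastCases with
    | last =>
      cases i' using Fin.lastCases with
      | last => exact absurd hi (lt_irrefl _)
      | cast i' => simpa using fun hj => hjU (hRU' i' hj)
    | cast i =>
      cases i' using Fin.lastCases with
      | last => exact absurd hi (not_lt.2 (Fin.castSucc_lt_last i).le)
      | cast i' => simpa using hnt i i' (by simpa using hi)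
  · intro u hu
    obtain ⟨i, -, hi⟩ := mem_biUnion.1 hu
    cases i using Fin.lastCases with
    | last => exact mem_union_right _ (by simpa using hi)
    | cast i => exact mem_union_left _ (hRU' i (by simpa using hi))

theorem extend (h : HasNtUnionIn G x U) {A L : Finset (Fin n)} (hLU : Disjoint L U)
    (hLA : Disjoint L A) (hreg : ∀ j ∈ L, regenSet G j (A ∪ {j})) :
    HasNtUnionIn G (x + L.card) (U ∪ A ∪ L) := by
  induction L using Finset.induction_on with
  | empty => simpa using h.mono subset_union_left
  | insert j L hj ih =>
    have hL := ih (disjoint_of_subset_left (subset_insert j L) hLU)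
      (disjoint_of_subset_left (subset_insert j L) hLA)
      (fun i hi => hreg i (mem_insert_of_mem hi))
    have hjUAL : j ∉ U ∪ A ∪ L := by
      simp only [mem_union, not_or]
      exact ⟨⟨disjoint_left.1 hLU (mem_insert_self j L),
        disjoint_left.1 hLA (mem_insert_self j L)⟩, hj⟩
    rw [card_insert_of_notMem hj, ← add_assoc]
    refine (hL.snoc hjUAL (hreg j (mem_insert_self j L))).mono ?_
    intro u
    simp only [mem_union, mem_insert, mem_singleton]
    tauto

theorem exists_erase (h : HasNtUnionIn G (x + 1) U) :
    ∃ i ∈ U, HasNtUnionIn G x (U.erase i) ∧ (fun t => G t i) ∈ colSpan G (U.erase i) := by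
  obtain ⟨l, R, ⟨hreg, hnt⟩, hRU⟩ := h
  have hRU' : ∀ i, R i ⊆ U := fun i => (subset_biUnion_of_mem R (mem_univ i)).trans hRU
  have hlast : ∀ i : Fin x, R i.castSucc ⊆ U.erase (l (Fin.last x)) := fun i u hu =>
    mem_erase.2 ⟨by rintro rfl; exact hnt _ _ (Fin.castSucc_lt_last i) hu, hRU' _ hu⟩
  refine ⟨l (Fin.last x), hRU' _ (hreg _).1,
    ⟨fun i => l i.castSucc, fun i => R i.castSucc, ⟨fun i => hreg _, fun i i' hi => hnt _ _ hi⟩,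
      biUnion_subset.2 fun i _ => hlast i⟩, ?_⟩
  exact Submodule.span_mono (Set.image_mono (coe_subset.2 (erase_subset_erase _ (hRU' _))))
    (hreg _).2

theorem of_succ (h : HasNtUnionIn G (x + 1) U) : HasNtUnionIn G x U :=
  let ⟨_, _, h', _⟩ := h.exists_erase
  h'.mono (erase_subset _ _)

/-- Each set of a nontrivial union contributes a coordinate whose column is a combination of
the other columns of the union. -/
theorem finrank_colSpan_add_le (h : HasNtUnionIn G x U) :
    finrank 𝔽 (colSpan G U) + x ≤ U.card := by
  induction x generalizing U with
  | zero => simpa using finrank_colSpan_le_card G U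
  | succ x ih =>
    obtain ⟨i, hiU, h', hi⟩ := h.exists_erase
    have hspan : colSpan G U = colSpan G (U.erase i) := by
      conv_lhs => rw [← insert_erase hiU]
      rw [colSpan, coe_insert, Set.image_insert_eq, Submodule.span_insert_eq_span hi, colSpan]
    have := ih h'
    rw [hspan, ← card_erase_add_one hiU]
    omega

theorem le_card (h : HasNtUnionIn G x U) : x ≤ U.card :=
  (Nat.le_add_left _ _).trans h.finrank_colSpan_add_le

theorem exists_notMem {k : ℕ} (hk : k = finrank 𝔽 (rowCode G)) (h : HasNtUnionIn G x U)
    (hU : U.card < k + x) : ∃ i, i ∉ U := by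
  by_contra! hall
  have hU' : U = univ := eq_univ_iff_forall.2 hall
  have := h.finrank_colSpan_add_le
  rw [hU', finrank_colSpan_univ, ← hk, ← hU'] at this
  omega

end HasNtUnionIn

section Phi

variable {x : ℕ} {U : Finset (Fin n)}

theorem Phi_le_card_s6 (h : HasNtUnionIn G x U) : Phi G x ≤ U.card :=
  let ⟨l, R, hnt, hRU⟩ := h
  le_trans (Nat.sInf_le ⟨l, R, hnt, rfl⟩) (card_le_card hRU)

theorem exists_hasNtUnionIn_card_eq_Phi (h : HasNtUnionIn G x U) :
    ∃ V, HasNtUnionIn G x V ∧ V.card = Phi G x := by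
  obtain ⟨l, R, hnt, -⟩ := h
  obtain ⟨l', R', hnt', hc⟩ := Nat.sInf_mem (s := {c | ∃ (l : Fin x → Fin n)
    (R : Fin x → Finset (Fin n)), ntUnion G x l R ∧ (univ.biUnion R).card = c}) ⟨_, l, R, hnt, rfl⟩
  exact ⟨_, ⟨l', R', hnt', subset_rfl⟩, hc⟩

theorem Phi_add_one_le (h : HasNtUnionIn G (x + 1) U) : Phi G x + 1 ≤ Phi G (x + 1) := by
  obtain ⟨V, hV, hVc⟩ := exists_hasNtUnionIn_card_eq_Phi h
  obtain ⟨i, hiV, hV', -⟩ := hV.exists_erase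
  have := Phi_le_card_s6 hV'
  rw [card_erase_of_mem hiV] at this
  have := card_pos.2 ⟨i, hiV⟩
  omega

theorem Phi_add_le {d : ℕ} (h : HasNtUnionIn G (x + d) U) : Phi G x + d ≤ Phi G (x + d) := by
  induction d generalizing U with
  | zero => rfl
  | succ d ih =>
    have h' : HasNtUnionIn G (x + d + 1) U := h
    have := ih h'.of_succ
    have := Phi_add_one_le h'
    show Phi G x + (d + 1) ≤ Phi G (x + d + 1)
    omega

theorem Phi_sub_lt_of_le_rho {k y : ℕ} (hy : 0 < y) (hyρ : y ≤ rho G k) : Phi G y - y < k := by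
  set S := {x | (∃ (l : Fin x → Fin n) (R : Fin x → Finset (Fin n)), ntUnion G x l R) ∧
    Phi G x - x < k}
  have hbdd : BddAbove S := ⟨n, fun x ⟨⟨l, R, hnt⟩, _⟩ =>
    (HasNtUnionIn.le_card ⟨l, R, hnt, subset_rfl⟩).trans
      ((card_le_univ _).trans_eq (Fintype.card_fin n))⟩
  have hne : S.Nonempty := by
    by_contra hS
    have : rho G k = 0 := by
      change sSup S = 0
      rw [Set.not_nonempty_iff_eq_empty.1 hS, csSup_empty]
      rfl
    omega
  obtain ⟨⟨l, R, hnt⟩, hlt⟩ := Nat.sSup_mem hne hbdd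
  have hρ : HasNtUnionIn G (rho G k) (univ.biUnion R) := ⟨l, R, hnt, subset_rfl⟩
  obtain ⟨d, hd⟩ := Nat.exists_eq_add_of_le hyρ
  rw [hd] at hρ
  have := Phi_add_le hρ
  change Phi G (rho G k) - rho G k < k at hlt
  rw [hd] at hlt
  omega

end Phi

theorem hasLocality.mono {T : Finset (Fin n)} {r r' δ : ℕ} (hloc : hasLocality G T r δ)
    (hr : r ≤ r') : hasLocality G T r' δ := fun ι hι =>
  let ⟨S, hST, hιS, hδS, hSr, hE⟩ := hloc ι hι
  ⟨S, hST, hιS, hδS, by omega, hE⟩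

theorem hasLocality.exists_step {T U : Finset (Fin n)} {r δ y s : ℕ} {ι : Fin n}
    (hloc : hasLocality G T r δ) (hU : HasNtUnionIn G y U) (hιT : ι ∈ T) (hιU : ι ∉ U)
    (hs : 0 < s) (hsδ : s < δ) :
    ∃ t V, 0 < t ∧ t ≤ s ∧ HasNtUnionIn G (y + t) V ∧ V ⊆ U ∪ T ∧
      V.card ≤ U.card + t + r ∧ (t < s → V.card ≤ U.card + t) := by
  obtain ⟨S, hST, hιS, hδS, hSr, hreg⟩ := hloc ι hιT
  obtain ⟨E, hES, hEc, hcmp⟩ :=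
    exists_subset_card_eq_and_subset_or_superset (c := δ - 1) (sdiff_subset (s := S) (t := U))
      (by omega)
  obtain ⟨L, hLE, hLc⟩ := exists_subset_card_eq (min_le_left (E \ U).card s)
  have hLS : L ⊆ S := hLE.trans (sdiff_subset.trans hES)
  have hV := hU.extend (A := S \ E) (L := L)
    (disjoint_of_subset_left hLE sdiff_disjoint)
    (disjoint_of_subset_left (hLE.trans sdiff_subset) disjoint_sdiff)
    (fun j hj => hreg E hES hEc j (sdiff_subset (hLE hj)))
  rw [hLc] at hV
  have hE_fresh : E ⊆ S \ U → E \ U = E := fun hEU =>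
    sdiff_eq_self_of_disjoint (disjoint_of_subset_left hEU sdiff_disjoint)
  have hnew : ((S \ E) \ U).card ≤ r := by
    have := card_le_card (sdiff_subset (s := S \ E) (t := U))
    rw [card_sdiff_of_subset hES] at this
    omega
  have hcard : (U ∪ (S \ E) ∪ L).card ≤ U.card + ((S \ E) \ U).card + min (E \ U).card s :=
    calc (U ∪ (S \ E) ∪ L).card ≤ (U ∪ (S \ E)).card + L.card := card_union_le _ _
      _ ≤ U.card + ((S \ E) \ U).card + min (E \ U).card s := by
        rw [← union_sdiff_self_eq_union, hLc]
        exact Nat.add_le_add_right (card_union_le U ((S \ E) \ U)) _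
  refine ⟨_, _, ?_, min_le_right _ _, hV, ?_, by omega, fun hlt => ?_⟩
  · rcases hcmp with hUE | hEU
    · exact lt_min (card_pos.2 ⟨ι, mem_sdiff.2 ⟨hUE (mem_sdiff.2 ⟨hιS, hιU⟩), hιU⟩⟩) hs
    · rw [hE_fresh hEU]
      omega
  · exact union_subset (union_subset subset_union_left (sdiff_subset.trans
      (hST.trans subset_union_right))) (hLS.trans (hST.trans subset_union_right))
  · rcases hcmp with hUE | hEU
    · rw [sdiff_eq_empty_iff_subset.2 (sdiff_le_comm.1 hUE), card_empty] at hcard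
      omega
    · rw [hE_fresh hEU] at hlt
      omega

theorem exists_hasNtUnionIn_block {W U : Finset (Fin n)} {c q r y goal : ℕ}
    (hfresh : ∀ y V, HasNtUnionIn G y V → V ⊆ W → V.card ≤ c + y → y < goal →
      ∃ ι T δ, ι ∉ V ∧ ι ∈ T ∧ T ⊆ W ∧ q < δ ∧ hasLocality G T r δ)
    (hU : HasNtUnionIn G y U) (hUW : U ⊆ W) (hcard : U.card ≤ c + y) (hy : y ≤ goal)
    (hgoal : goal ≤ y + q) :
    ∃ V, HasNtUnionIn G goal V ∧ V ⊆ W ∧ V.card ≤ c + goal + r := by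
  induction hd : goal - y using Nat.strong_induction_on generalizing y U with
  | _ d ih =>
  rcases hy.eq_or_lt with rfl | hlt
  · exact ⟨U, hU, hUW, by omega⟩
  obtain ⟨ι, T, δ, hιU, hιT, hTW, hqδ, hloc⟩ := hfresh y U hU hUW hcard hlt
  obtain ⟨t, V, ht, hts, hV, hVsub, hVc, hVc'⟩ :=
    hloc.exists_step hU hιT hιU (s := goal - y) (by omega) (by omega)
  have hVW : V ⊆ W := hVsub.trans (union_subset hUW hTW)
  rcases hts.eq_or_lt with rfl | hts
  · rw [Nat.add_sub_cancel' hy] at hV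
    exact ⟨V, hV, hVW, by omega⟩
  · exact ih _ (by omega) hV hVW (by have := hVc' hts; omega) (by omega) (by omega) rfl

theorem hasLocality.exists_hasNtUnionIn_mul {T : Finset (Fin n)} {r δ q : ℕ}
    (hloc : hasLocality G T r δ) (hqδ : q < δ) (b : ℕ) (hb : r * (b - 1) + b * q ≤ T.card) :
    ∃ U, HasNtUnionIn G (b * q) U ∧ U ⊆ T ∧ U.card ≤ b * q + r * b := by
  induction b with
  | zero => exact ⟨∅, by simpa using HasNtUnionIn.zero, empty_subset _, by simp⟩
  | succ b ih =>
    have hmul : (b + 1) * q = b * q + q := Nat.succ_mul b q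
    have hr : r * (b - 1) ≤ r * b := Nat.mul_le_mul_left r (Nat.sub_le b 1)
    simp only [Nat.add_sub_cancel] at hb
    obtain ⟨U, hU, hUT, hUc⟩ := ih (by omega)
    obtain ⟨V, hV, hVT, hVc⟩ := exists_hasNtUnionIn_block (W := T) (c := r * b)
      (goal := (b + 1) * q)
      (fun y V _ hVT hVc hy => by
        obtain ⟨ι, hιT, hιV⟩ := exists_mem_notMem_of_card_lt_card (s := V) (t := T) (by omega)
        exact ⟨ι, T, δ, hιV, hιT, subset_rfl, hqδ, hloc⟩)
      hU hUT (by omega) (by omega) (by omega)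
    refine ⟨V, hV, hVT, ?_⟩
    rw [Nat.mul_succ]
    omega

section Rho

variable {k r q : ℕ} (hk : k = finrank 𝔽 (rowCode G))
  (hloc : ∀ ι, ∃ T δ, ι ∈ T ∧ q < δ ∧ hasLocality G T r δ)
include hk hloc

theorem exists_hasNtUnionIn_add_le_Phi {y s : ℕ} {U : Finset (Fin n)} (hy : 0 < y)
    (hyρ : y ≤ rho G k) (hU : HasNtUnionIn G y U) (hs : s ≤ q) :
    ∃ V, HasNtUnionIn G (y + s) V ∧ V.card ≤ Phi G y + s + r := by
  obtain ⟨U₀, hU₀, hU₀c⟩ := exists_hasNtUnionIn_card_eq_Phi hU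
  have hlt := Phi_sub_lt_of_le_rho hy hyρ
  have hyΦ := hU₀c ▸ hU₀.le_card
  obtain ⟨V, hV, -, hVc⟩ := exists_hasNtUnionIn_block (W := univ) (c := Phi G y - y)
    (goal := y + s) (fun y' V hV _ hVc _ => by
      obtain ⟨ι, hι⟩ := hV.exists_notMem hk (by omega)
      obtain ⟨T, δ, hιT, hqδ, hlocT⟩ := hloc ι
      exact ⟨ι, T, δ, hι, hιT, subset_univ T, hqδ, hlocT⟩)
    hU₀ (subset_univ _) (by omega) (by omega) (by omega)
  exact ⟨V, hV, by omega⟩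

theorem exists_hasNtUnionIn_of_le_rho_add_one {y₀ : ℕ} {U₀ : Finset (Fin n)} (hy₀ : 0 < y₀)
    (hU₀ : HasNtUnionIn G y₀ U₀) (b : ℕ) {z : ℕ} (hz₀ : y₀ ≤ z) (hzb : z ≤ y₀ + b * q)
    (hzρ : z ≤ rho G k + 1) : ∃ V, HasNtUnionIn G z V ∧ V.card + y₀ ≤ U₀.card + z + r * b := by
  induction b generalizing z with
  | zero =>
    obtain rfl : z = y₀ := by simp at hzb; omega
    exact ⟨U₀, hU₀, by omega⟩
  | succ b ih =>
    have hmul : (b + 1) * q = b * q + q := Nat.succ_mul b q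
    have hrb : r * (b + 1) = r * b + r := Nat.mul_succ r b
    by_cases hz : z ≤ y₀ + b * q
    · obtain ⟨V, hV, hVc⟩ := ih hz₀ hz hzρ
      exact ⟨V, hV, by omega⟩
    · obtain ⟨V', hV', hV'c⟩ := ih (z := y₀ + b * q) (by omega) le_rfl (by omega)
      obtain ⟨V, hV, hVc⟩ := exists_hasNtUnionIn_add_le_Phi hk hloc (by omega) (by omega) hV'
        (s := z - (y₀ + b * q)) (by omega)
      rw [Nat.add_sub_cancel' (by omega)] at hV
      have := Phi_le_card_s6 hV'
      exact ⟨V, hV, by omega⟩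

end Rho

end CodeLocality

theorem phi_bound_two_localities_second_general {𝔽 : Type*} [Field 𝔽] {m n : ℕ}
    (G : Matrix (Fin m) (Fin n) 𝔽) (k : ℕ)
    (hk : k = Module.finrank 𝔽 (rowCode G))
    (T₁ T₂ : Finset (Fin n)) (n₁ r₁ r₂ δ₁ δ₂ : ℕ)
    (hcover : T₁ ∪ T₂ = Finset.univ)
    (hn₁ : T₁.card = n₁)
    (hr : r₁ ≤ r₂) (hδ : δ₂ ≤ δ₁) (hδ₂ : 2 ≤ δ₂)
    (hloc₁ : hasLocality G T₁ r₁ δ₁) (hloc₂ : hasLocality G T₂ r₂ δ₂)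
    (Δ : ℕ) (hΔ : Δ = cdiv n₁ (r₁ + δ₁ - 1) * (δ₁ - 1))
    (h2 : r₁ * cdiv (Δ - 1) (δ₁ - 1) + (Δ - 1) < n₁) :
    ∀ x, Δ ≤ x → x ≤ rho G k + 1 →
      Phi G x ≤ r₁ * cdiv n₁ (r₁ + δ₁ - 1) + r₂ * cdiv (x - Δ) (δ₂ - 1) + x := by
  intro x hΔx hxρ
  set a := cdiv n₁ (r₁ + δ₁ - 1)
  have ha : 0 < a := Nat.div_pos (by omega) (by omega)
  have hΔpos : 0 < Δ := hΔ ▸ Nat.mul_pos ha (by omega)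
  have hblocks : r₁ * (a - 1) ≤ r₁ * cdiv (Δ - 1) (δ₁ - 1) :=
    Nat.mul_le_mul_left r₁ (hΔ ▸ sub_one_le_cdiv_mul_sub_one a (by omega))
  obtain ⟨U₀, hU₀, -, hU₀c⟩ :=
    hloc₁.exists_hasNtUnionIn_mul (q := δ₁ - 1) (by omega) a (by omega)
  rw [← hΔ] at hU₀ hU₀c
  have hloc : ∀ ι, ∃ T δ, ι ∈ T ∧ δ₂ - 1 < δ ∧ hasLocality G T r₂ δ := fun ι =>
    (Finset.mem_union.1 (hcover ▸ Finset.mem_univ ι)).elim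
      (fun h => ⟨T₁, δ₁, h, by omega, hloc₁.mono hr⟩) (fun h => ⟨T₂, δ₂, h, by omega, hloc₂⟩)
  obtain ⟨V, hV, hVc⟩ := exists_hasNtUnionIn_of_le_rho_add_one hk hloc hΔpos hU₀
    (cdiv (x - Δ) (δ₂ - 1)) hΔx (by have := le_cdiv_mul (x - Δ) (q := δ₂ - 1) (by omega); omega)
    hxρ
  have := Phi_le_card_s6 hV
  omega

/-- Lemma 3.1, second part: bound on `Φ(x)` for `Δ ≤ x ≤ ρ + 1`. -/
theorem phi_bound_two_localities_second {𝔽 : Type*} [Field 𝔽] {m n : ℕ}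
    (G : Matrix (Fin m) (Fin n) 𝔽) (k : ℕ)
    (hk : k = Module.finrank 𝔽 (rowCode G))
    (T₁ T₂ : Finset (Fin n)) (n₁ n₂ r₁ r₂ δ₁ δ₂ : ℕ)
    (hdisj : Disjoint T₁ T₂) (hcover : T₁ ∪ T₂ = Finset.univ)
    (hn₁ : T₁.card = n₁) (hn₂ : T₂.card = n₂)
    (hr : r₁ ≤ r₂) (hδ : δ₂ ≤ δ₁) (hδ₂ : 2 ≤ δ₂)
    (hloc₁ : hasLocality G T₁ r₁ δ₁) (hloc₂ : hasLocality G T₂ r₂ δ₂)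
    (Δ : ℕ) (hΔ : Δ = cdiv n₁ (r₁ + δ₁ - 1) * (δ₁ - 1))
    (h1 : r₁ * cdiv n₁ (r₁ + δ₁ - 1) ≤ k - 1)
    (h2 : r₁ * cdiv (Δ - 1) (δ₁ - 1) + (Δ - 1) < n₁) :
    ∀ x, Δ ≤ x → x ≤ rho G k + 1 →
      Phi G x ≤ r₁ * cdiv n₁ (r₁ + δ₁ - 1) + r₂ * cdiv (x - Δ) (δ₂ - 1) + x :=
  phi_bound_two_localities_second_general G k hk T₁ T₂ n₁ r₁ r₂ δ₁ δ₂ hcover hn₁ hr hδ hδ₂ hloc₁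
    hloc₂ Δ hΔ h2
end

section
/- Let C be an [n,k,d] linear code with multiple (r_i,δ_i)_{i∈[s]}-localities (s ≥ 2), with r_1 ≤ ⋯ ≤ r_s, δ_1 ≥ ⋯ ≥ δ_s ≥ 2. Suppose Σ_{i=1}^{s−1} r_i⌈n_i/(r_i+δ_i−1)⌉ ≤ k−1 and for each j ∈ [s−1], r_j⌈(Δ_j−Δ_{j−1}−1)/(δ_j−1)⌉ + (Δ_j−Δ_{j−1}−1) < n_j, where Δ_0 = 0 and Δ_j = Σ_{i=1}^j ⌈n_i/(r_i+δ_i−1)⌉(δ_i−1). Then for each j ∈ [s−1] and Δ_{j−1} ≤ x ≤ Δ_j: Φ(x) ≤ Σ_{i=1}^{j−1} r_i⌈n_i/(r_i+δ_i−1)⌉ + r_j⌈(x−Δ_{j−1})/(δ_j−1)⌉ + x. -/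
open scoped Classical

/-!
`Φ(x)` is bounded by exhibiting `x` regenerating sets with a nontrivial union. If `S` is the
locality set of a coordinate and `E ⊆ S` has `δ - 1` elements, the sets `(S \ E) ∪ {e}`,
`e ∈ E`, regenerate `δ - 1` coordinates at the price of at most `r + δ - 1` coordinates.
Repeating this greedily inside one class, always starting from a coordinate not covered yet,
`c` coordinates of the class cost at most `c + r⌈c/(δ-1)⌉`; hypothesis `h2` guarantees that a
fresh coordinate is left at every round. Filling the classes `T₀, …, T_{j-1}` completely
(`Δ j` coordinates) and taking `x - Δ j` coordinates from `T j` gives the bound.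
-/


theorem zero_cdiv (b : ℕ) : cdiv 0 b = 0 := by
  rcases b with _ | b
  · rfl
  · exact Nat.div_eq_of_lt (by omega)

theorem cdiv_le_cdiv_left {a a' : ℕ} (b : ℕ) (h : a ≤ a') : cdiv a b ≤ cdiv a' b :=
  Nat.div_le_div_right (by omega)

theorem cdiv_add_self (a : ℕ) {b : ℕ} (hb : 0 < b) : cdiv (a + b) b = cdiv a b + 1 := by
  rw [cdiv, show a + b + b - 1 = (a + b - 1) + 1 * b by omega, Nat.add_mul_div_right _ _ hb]
  rfl

theorem mul_cdiv_cancel (a : ℕ) {b : ℕ} (hb : 0 < b) : cdiv (a * b) b = a := by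
  rw [cdiv, show a * b + b - 1 = (b - 1) + a * b by omega, Nat.add_mul_div_right _ _ hb,
    Nat.div_eq_of_lt (by omega), zero_add]

theorem cdiv_pos {c b : ℕ} (hc : 0 < c) (hb : 0 < b) : 0 < cdiv c b :=
  (Nat.one_le_div_iff hb).2 (by omega)

/-- The bookkeeping of one greedy round: the `g ≤ r` coordinates it covers beyond its own `u`
are paid for by the drop of `r⌈c/d⌉`. -/
theorem add_mul_cdiv_sub_le {g r u c d : ℕ} (hd : 0 < d) (hu : 0 < u) (huc : u ≤ c)
    (hg : g = 0 ∨ g ≤ r ∧ u = min c d) : g + r * cdiv (c - u) d ≤ r * cdiv c d := by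
  rcases hg with rfl | ⟨hgr, hud⟩
  · simpa using Nat.mul_le_mul_left r (cdiv_le_cdiv_left d (Nat.sub_le c u))
  · rcases Nat.eq_or_lt_of_le huc with rfl | hlt
    · have := Nat.mul_le_mul_left r (cdiv_pos hu hd)
      simp only [Nat.sub_self, zero_cdiv, mul_zero, add_zero]
      omega
    · have hcu : c - u + d = c := by omega
      have := cdiv_add_self (c - u) hd
      rw [hcu] at this
      rw [this, mul_add]
      omega

theorem add_mul_cdiv_pred_le {c D N r d : ℕ} (hcD : c ≤ D)
    (h : r * cdiv (D - 1) d + (D - 1) < N) : c + r * cdiv (c - 1) d ≤ N := by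
  have := Nat.mul_le_mul_left r (cdiv_le_cdiv_left d (Nat.sub_le_sub_right hcD 1))
  omega

theorem Finset.exists_subset_card_eq_comparable {α : Type*} {N S : Finset α} {k : ℕ}
    (hNS : N ⊆ S) (hk : k ≤ S.card) : ∃ E ⊆ S, E.card = k ∧ (N ⊆ E ∨ E ⊆ N) := by
  by_cases hN : N.card ≤ k
  · obtain ⟨E, hNE, hES, hE⟩ := Finset.exists_subsuperset_card_eq hNS hN hk
    exact ⟨E, hES, hE, Or.inl hNE⟩
  · obtain ⟨E, hEN, hE⟩ := Finset.exists_subset_card_eq (s := N) (n := k) (by omega)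
    exact ⟨E, hEN.trans hNS, hE, Or.inr hEN⟩

section Chain

variable {𝔽 : Type*} [Field 𝔽] {m n : ℕ} (G : Matrix (Fin m) (Fin n) 𝔽)

/-- `ntUnion` with the indexing by `Fin x` replaced by a list, so that chains concatenate. -/
def IsNontrivialChain (L : List (Fin n × Finset (Fin n))) : Prop :=
  (∀ p ∈ L, regenSet G p.1 p.2) ∧ L.Pairwise fun p q => q.1 ∉ p.2

def chainSupport (L : List (Fin n × Finset (Fin n))) : Finset (Fin n) :=
  L.toFinset.biUnion Prod.snd

variable {G}

theorem mem_chainSupport {L : List (Fin n × Finset (Fin n))} {a : Fin n} :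
    a ∈ chainSupport L ↔ ∃ p ∈ L, a ∈ p.2 := by
  simp [chainSupport]

theorem chainSupport_append (L₁ L₂ : List (Fin n × Finset (Fin n))) :
    chainSupport (L₁ ++ L₂) = chainSupport L₁ ∪ chainSupport L₂ := by
  simp [chainSupport, List.toFinset_append, Finset.union_biUnion]

theorem isNontrivialChain_nil : IsNontrivialChain G [] :=
  ⟨fun _ h => absurd h List.not_mem_nil, List.Pairwise.nil⟩

theorem IsNontrivialChain.append {L₁ L₂ : List (Fin n × Finset (Fin n))}
    (h₁ : IsNontrivialChain G L₁) (h₂ : IsNontrivialChain G L₂)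
    (h : ∀ p ∈ L₁, ∀ q ∈ L₂, q.1 ∉ p.2) : IsNontrivialChain G (L₁ ++ L₂) := by
  refine ⟨fun p hp => ?_, List.pairwise_append.2 ⟨h₁.2, h₂.2, h⟩⟩
  rcases List.mem_append.1 hp with hp | hp
  exacts [h₁.1 p hp, h₂.1 p hp]

theorem Phi_le_card_chainSupport {L : List (Fin n × Finset (Fin n))}
    (hL : IsNontrivialChain G L) : Phi G L.length ≤ (chainSupport L).card := by
  refine Nat.sInf_le ⟨fun t => (L.get t).1, fun t => (L.get t).2,
    ⟨fun t => hL.1 _ (L.get_mem t), fun a b hba => List.pairwise_iff_get.1 hL.2 b a hba⟩, ?_⟩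
  congr 1
  ext y
  simp only [Finset.mem_biUnion, Finset.mem_univ, true_and, mem_chainSupport]
  constructor
  · rintro ⟨t, ht⟩
    exact ⟨L.get t, L.get_mem t, ht⟩
  · rintro ⟨p, hp, hy⟩
    obtain ⟨t, rfl⟩ := List.mem_iff_get.1 hp
    exact ⟨t, hy⟩

noncomputable def starChain (A F : Finset (Fin n)) : List (Fin n × Finset (Fin n)) :=
  F.toList.map fun f => (f, A ∪ {f})

theorem mem_starChain {A F : Finset (Fin n)} {p : Fin n × Finset (Fin n)} :
    p ∈ starChain A F ↔ p.1 ∈ F ∧ p.2 = A ∪ {p.1} := by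
  obtain ⟨a, P⟩ := p
  simp only [starChain, List.mem_map, Finset.mem_toList, Prod.mk.injEq]
  constructor
  · rintro ⟨f, hf, rfl, rfl⟩
    exact ⟨hf, rfl⟩
  · rintro ⟨ha, rfl⟩
    exact ⟨a, ha, rfl, rfl⟩

theorem length_starChain (A F : Finset (Fin n)) : (starChain A F).length = F.card := by
  simp [starChain]

theorem isNontrivialChain_starChain {A F : Finset (Fin n)}
    (hF : ∀ f ∈ F, regenSet G f (A ∪ {f})) (hAF : Disjoint A F) :
    IsNontrivialChain G (starChain A F) := by
  refine ⟨fun p hp => ?_, ?_⟩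
  · obtain ⟨hp₁, hp₂⟩ := mem_starChain.1 hp
    exact hp₂ ▸ hF p.1 hp₁
  · refine List.pairwise_map.2 (List.Pairwise.imp_of_mem ?_ F.nodup_toList)
    intro a b _ hb hab
    simp only [Finset.mem_union, Finset.mem_singleton, not_or]
    exact ⟨Finset.disjoint_right.1 hAF (Finset.mem_toList.1 hb), Ne.symm hab⟩

theorem card_chainSupport_starChain_sdiff_le (A F B : Finset (Fin n)) :
    (chainSupport (starChain A F) \ B).card ≤ (A \ B).card + F.card := by
  refine (Finset.card_le_card fun a ha => ?_).trans (Finset.card_union_le _ _)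
  obtain ⟨ha, haB⟩ := Finset.mem_sdiff.1 ha
  obtain ⟨p, hp, hap⟩ := mem_chainSupport.1 ha
  obtain ⟨hp₁, hp₂⟩ := mem_starChain.1 hp
  rw [hp₂, Finset.mem_union, Finset.mem_singleton] at hap
  rcases hap with h | rfl
  · exact Finset.mem_union_left F (Finset.mem_sdiff.2 ⟨h, haB⟩)
  · exact Finset.mem_union_right _ hp₁

end Chain

namespace hasLocality

variable {𝔽 : Type*} [Field 𝔽] {m n : ℕ} {G : Matrix (Fin m) (Fin n) 𝔽}
  {T : Finset (Fin n)} {r δ : ℕ}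

theorem exists_chain_step (hloc : hasLocality G T r δ) (hδ : 2 ≤ δ) {B : Finset (Fin n)}
    {ι : Fin n} (hιT : ι ∈ T) (hιB : ι ∉ B) {c : ℕ} (hc : 0 < c) :
    ∃ L, IsNontrivialChain G L ∧ 0 < L.length ∧ L.length ≤ c ∧ (∀ p ∈ L, p.2 ⊆ T) ∧
      (∀ p ∈ L, p.1 ∉ B) ∧ ((chainSupport L \ B).card ≤ L.length ∨
        (chainSupport L \ B).card ≤ L.length + r ∧ L.length = min c (δ - 1)) := by
  obtain ⟨S, hST, hιS, hδS, hSr, hSregen⟩ := hloc ι hιT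
  have hιN : ι ∈ S \ B := Finset.mem_sdiff.2 ⟨hιS, hιB⟩
  -- `E` takes as many coordinates of `S \ B` as it can: if it takes all of them, the round
  -- covers nothing outside `B` but its own coordinates; otherwise it takes a full batch of
  -- `min c (δ - 1)` coordinates and covers at most the `r` further ones of `S \ E`.
  obtain ⟨E, hES, hEcard, hNE⟩ :=
    Finset.exists_subset_card_eq_comparable (Finset.sdiff_subset (s := S) (t := B)) (k := δ - 1)
      (by omega)
  have hpos : 0 < (E ∩ (S \ B)).card := by
    rcases hNE with hNE | hEN
    · exact Finset.card_pos.2 ⟨ι, Finset.mem_inter.2 ⟨hNE hιN, hιN⟩⟩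
    · rw [Finset.inter_eq_left.2 hEN]
      omega
  obtain ⟨F, hF, hFcard⟩ := Finset.exists_subset_card_eq (min_le_right c (E ∩ (S \ B)).card)
  have hFE : F ⊆ E := hF.trans Finset.inter_subset_left
  have hFN : F ⊆ S \ B := hF.trans Finset.inter_subset_right
  have hsupp := card_chainSupport_starChain_sdiff_le (S \ E) F B
  refine ⟨starChain (S \ E) F,
    isNontrivialChain_starChain (fun f hf => hSregen E hES hEcard f (hFE hf))
      (Finset.disjoint_of_subset_right hFE Finset.sdiff_disjoint), ?_, ?_,
    fun p hp => ?_, fun p hp => ?_, ?_⟩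
  · rw [length_starChain]
    omega
  · rw [length_starChain]
    omega
  · rw [(mem_starChain.1 hp).2]
    exact Finset.union_subset (Finset.sdiff_subset.trans hST)
      (Finset.singleton_subset_iff.2 (hST (hES (hFE (mem_starChain.1 hp).1))))
  · exact (Finset.mem_sdiff.1 (hFN (mem_starChain.1 hp).1)).2
  · rw [length_starChain]
    rcases hNE with hNE | hEN
    · left
      rwa [sdiff_sdiff_comm, Finset.sdiff_eq_empty_iff_subset.2 hNE, Finset.card_empty,
        zero_add] at hsupp
    · right
      have := Finset.card_le_card (Finset.sdiff_subset (s := S \ E) (t := B))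
      rw [Finset.card_sdiff_of_subset hES] at this
      rw [Finset.inter_eq_left.2 hEN, hEcard] at hFcard
      omega

/-- The bound on `T.card` leaves an uncovered coordinate of `T` before every greedy round. -/
theorem exists_chain (hloc : hasLocality G T r δ) (hδ : 2 ≤ δ) (c : ℕ) (B : Finset (Fin n))
    (hB : B.card + c + r * cdiv (c - 1) (δ - 1) ≤ T.card) :
    ∃ L, IsNontrivialChain G L ∧ L.length = c ∧ (∀ p ∈ L, p.2 ⊆ T) ∧ (∀ p ∈ L, p.1 ∉ B) ∧
      (chainSupport L \ B).card ≤ c + r * cdiv c (δ - 1) := by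
  induction c using Nat.strong_induction_on generalizing B with
  | _ c ih =>
  rcases Nat.eq_zero_or_pos c with rfl | hc
  · exact ⟨[], isNontrivialChain_nil, rfl, by simp, by simp, by simp [chainSupport]⟩
  obtain ⟨ι, hιT, hιB⟩ : ∃ ι ∈ T, ι ∉ B := Finset.not_subset.1 fun hTB => by
    have := Finset.card_le_card hTB
    omega
  obtain ⟨L₁, hL₁, hu, huc, hL₁T, hL₁B, hcost⟩ := hloc.exists_chain_step hδ hιT hιB hc
  set u := L₁.length
  set g := (chainSupport L₁ \ B).card - u
  have hg : g = 0 ∨ g ≤ r ∧ u = min c (δ - 1) := by omega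
  have hδ1 : 0 < δ - 1 := by omega
  have hstep := add_mul_cdiv_sub_le hδ1 hu huc hg
  rcases Nat.eq_or_lt_of_le huc with hcu | hcu
  · refine ⟨L₁, hL₁, hcu, hL₁T, hL₁B, ?_⟩
    rw [hcu, Nat.sub_self, zero_cdiv] at hstep
    omega
  set B' := B ∪ chainSupport L₁
  have hB' : B'.card ≤ B.card + g + u := by
    have := Finset.card_union_le B (chainSupport L₁ \ B)
    rw [Finset.union_sdiff_self_eq_union] at this
    exact this.trans (by omega)
  have hstep' := add_mul_cdiv_sub_le (c := c - 1) hδ1 hu (by omega)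
    (hg.imp_right fun h => ⟨h.1, by omega⟩)
  obtain ⟨L₂, hL₂, hlen₂, hL₂T, hL₂B, hcost₂⟩ :=
    ih (c - u) (by omega) B' (by rw [show c - u - 1 = c - 1 - u by omega]; omega)
  refine ⟨L₁ ++ L₂, hL₁.append hL₂ fun p hp q hq hqp => hL₂B q hq
      (Finset.mem_union_right B (mem_chainSupport.2 ⟨p, hp, hqp⟩)), by simp; omega, ?_, ?_, ?_⟩
  · exact List.forall_mem_append.2 ⟨hL₁T, hL₂T⟩
  · exact List.forall_mem_append.2
      ⟨hL₁B, fun p hp h => hL₂B p hp (Finset.mem_union_left _ h)⟩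
  · have hsub : chainSupport (L₁ ++ L₂) \ B ⊆ (chainSupport L₁ \ B) ∪ (chainSupport L₂ \ B') := by
      intro a ha
      simp only [chainSupport_append, B', Finset.mem_sdiff, Finset.mem_union] at ha ⊢
      tauto
    have := (Finset.card_le_card hsub).trans (Finset.card_union_le _ _)
    omega

end hasLocality

theorem exists_chain_of_pairwise_disjoint {𝔽 : Type*} [Field 𝔽] {m n : ℕ}
    {G : Matrix (Fin m) (Fin n) 𝔽} {T : ℕ → Finset (Fin n)} {r δ c : ℕ → ℕ} (t : ℕ)
    (hdisj : ∀ i < t, ∀ j < t, i ≠ j → Disjoint (T i) (T j))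
    (hδ : ∀ i < t, 2 ≤ δ i) (hloc : ∀ i < t, hasLocality G (T i) (r i) (δ i))
    (hc : ∀ i < t, c i + r i * cdiv (c i - 1) (δ i - 1) ≤ (T i).card) :
    ∃ L, IsNontrivialChain G L ∧ L.length = ∑ i ∈ Finset.range t, c i ∧
      (∀ p ∈ L, p.2 ⊆ (Finset.range t).biUnion T) ∧
      (chainSupport L).card ≤ ∑ i ∈ Finset.range t, (c i + r i * cdiv (c i) (δ i - 1)) := by
  induction t with
  | zero => exact ⟨[], isNontrivialChain_nil, rfl, by simp, by simp [chainSupport]⟩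
  | succ t ih =>
  obtain ⟨L₁, hL₁, hlen₁, hL₁T, hcard₁⟩ :=
    ih (fun i hi j hj => hdisj i (by omega) j (by omega)) (fun i hi => hδ i (by omega))
      (fun i hi => hloc i (by omega)) (fun i hi => hc i (by omega))
  obtain ⟨L₂, hL₂, hlen₂, hL₂T, -, hcard₂⟩ :=
    (hloc t (by omega)).exists_chain (hδ t (by omega)) (c t) ∅ (by simpa using hc t (by omega))
  have hdisj' : Disjoint ((Finset.range t).biUnion T) (T t) :=
    (Finset.disjoint_biUnion_left _ _ _).2 fun i hi =>
      hdisj i (by simp at hi; omega) t (by omega) (by simp at hi; omega)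
  refine ⟨L₁ ++ L₂, hL₁.append hL₂ fun p hp q hq hqp => Finset.disjoint_left.1 hdisj'
      (hL₁T p hp hqp) (hL₂T q hq (hL₂.1 q hq).1), by simp [hlen₁, hlen₂, Finset.sum_range_succ],
    fun p hp => ?_, ?_⟩
  · rw [Finset.range_add_one, Finset.biUnion_insert]
    rcases List.mem_append.1 hp with hp | hp
    exacts [(hL₁T p hp).trans Finset.subset_union_right,
      (hL₂T p hp).trans Finset.subset_union_left]
  · rw [chainSupport_append, Finset.sum_range_succ]
    have := Finset.card_union_le (chainSupport L₁) (chainSupport L₂)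
    simp only [Finset.sdiff_empty] at hcard₂
    omega

theorem phi_bound_multiple_localities_general {𝔽 : Type*} [Field 𝔽] {m n : ℕ}
    (G : Matrix (Fin m) (Fin n) 𝔽)
    (s : ℕ) (T : ℕ → Finset (Fin n)) (nn r δ : ℕ → ℕ)
    (hdisj : ∀ i < s, ∀ j < s, i ≠ j → Disjoint (T i) (T j))
    (hcard : ∀ i < s, (T i).card = nn i)
    (hδ2 : ∀ i < s, 2 ≤ δ i)
    (hloc : ∀ i < s, hasLocality G (T i) (r i) (δ i))
    (Δ : ℕ → ℕ)
    (hΔ : ∀ j, Δ j = ∑ i ∈ Finset.range j, cdiv (nn i) (r i + δ i - 1) * (δ i - 1))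
    (h2 : ∀ j < s - 1,
      r j * cdiv (Δ (j + 1) - Δ j - 1) (δ j - 1) + (Δ (j + 1) - Δ j - 1) < nn j) :
    ∀ j < s - 1, ∀ x, Δ j ≤ x → x ≤ Δ (j + 1) →
      Phi G x ≤ (∑ i ∈ Finset.range j, r i * cdiv (nn i) (r i + δ i - 1))
        + r j * cdiv (x - Δ j) (δ j - 1) + x := by
  intro j hj x hxj hxj'
  have hΔsucc (i : ℕ) : Δ (i + 1) = Δ i + cdiv (nn i) (r i + δ i - 1) * (δ i - 1) := by
    rw [hΔ, hΔ, Finset.sum_range_succ]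
  let c i := if i = j then x - Δ j else cdiv (nn i) (r i + δ i - 1) * (δ i - 1)
  have hfull : ∀ i ∈ Finset.range j, c i = cdiv (nn i) (r i + δ i - 1) * (δ i - 1) :=
    fun i hi => if_neg (Finset.mem_range.1 hi).ne
  obtain ⟨L, hL, hlen, -, hsupp⟩ := exists_chain_of_pairwise_disjoint (G := G) (c := c) (j + 1)
    (fun i hi k hk => hdisj i (by omega) k (by omega)) (fun i hi => hδ2 i (by omega))
    (fun i hi => hloc i (by omega)) fun i hi => by
      refine hcard i (by omega) ▸ add_mul_cdiv_pred_le ?_ (h2 i (by omega))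
      by_cases hij : i = j
      · subst hij
        simp only [c, if_pos rfl]
        omega
      · simp only [c, if_neg hij, hΔsucc]
        omega
  have hsum : ∑ i ∈ Finset.range (j + 1), c i = x := by
    rw [Finset.sum_range_succ, Finset.sum_congr rfl hfull, ← hΔ]
    simp only [c, if_pos rfl]
    omega
  have hcost : ∑ i ∈ Finset.range (j + 1), (c i + r i * cdiv (c i) (δ i - 1)) =
      (∑ i ∈ Finset.range j, r i * cdiv (nn i) (r i + δ i - 1))
        + r j * cdiv (x - Δ j) (δ j - 1) + x := by
    rw [Finset.sum_range_succ, Finset.sum_congr rfl fun i hi => by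
      rw [hfull i hi, mul_cdiv_cancel _ (by have := hδ2 i (by simp at hi; omega); omega)],
      Finset.sum_add_distrib, ← hΔ]
    simp only [c, if_pos rfl]
    omega
  calc Phi G x = Phi G L.length := by rw [hlen, hsum]
    _ ≤ (chainSupport L).card := Phi_le_card_chainSupport hL
    _ ≤ _ := hsupp
    _ = _ := hcost

/-- Lemma 3.2, first part: bound on `Φ(x)` for codes with multiple
`(rᵢ, δᵢ)`-localities, for `Δ_{j−1} ≤ x ≤ Δ_j`, `j ∈ [s−1]` (here `0`-indexed: `j < s−1`). -/
theorem phi_bound_multiple_localities {𝔽 : Type*} [Field 𝔽] {m n : ℕ}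
    (G : Matrix (Fin m) (Fin n) 𝔽) (k : ℕ)
    (hk : k = Module.finrank 𝔽 (rowCode G))
    (s : ℕ) (hs : 2 ≤ s) (T : ℕ → Finset (Fin n)) (nn r δ : ℕ → ℕ)
    (hdisj : ∀ i < s, ∀ j < s, i ≠ j → Disjoint (T i) (T j))
    (hcover : (Finset.range s).biUnion T = Finset.univ)
    (hcard : ∀ i < s, (T i).card = nn i)
    (hrmono : ∀ i j, i ≤ j → j < s → r i ≤ r j)
    (hδmono : ∀ i j, i ≤ j → j < s → δ j ≤ δ i)
    (hδ2 : ∀ i < s, 2 ≤ δ i)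
    (hloc : ∀ i < s, hasLocality G (T i) (r i) (δ i))
    (Δ : ℕ → ℕ)
    (hΔ : ∀ j, Δ j = ∑ i ∈ Finset.range j, cdiv (nn i) (r i + δ i - 1) * (δ i - 1))
    (h1 : ∑ i ∈ Finset.range (s - 1), r i * cdiv (nn i) (r i + δ i - 1) ≤ k - 1)
    (h2 : ∀ j < s - 1,
      r j * cdiv (Δ (j + 1) - Δ j - 1) (δ j - 1) + (Δ (j + 1) - Δ j - 1) < nn j) :
    ∀ j < s - 1, ∀ x, Δ j ≤ x → x ≤ Δ (j + 1) →
      Phi G x ≤ (∑ i ∈ Finset.range j, r i * cdiv (nn i) (r i + δ i - 1))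
        + r j * cdiv (x - Δ j) (δ j - 1) + x :=
  phi_bound_multiple_localities_general G s T nn r δ hdisj hcard hδ2 hloc Δ hΔ h2
end
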